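/- Let G = (V,E) be a finite simple graph and let x ≥ 0 be an integer. For every subset S of the vertex set of the subdivided graph G^x, letting c be the number of edges of G^x with exactly one endpoint in S, there exists a subset S' ⊆ V such that the number of edges of G with exactly one endpoint in S' is at least c − 2x·|E|. -/

import Mathlib

/-! Take `S' = S ∩ V`. The path of odd length `2x+1` replacing an edge `uv` of `G` has at most
`2x+1` cut edges, and if all of them are cut its vertices alternate sides, so `u` and `v` lie on
different sides: `uv` is then cut by `S'`. Hence every path contributes at most
`2x + [uv is cut by S']` to the cut of `S`. -/

open scoped Classical

/-- The vertex set of the `(2x+1)`-subdivision `G^x` of `G`: the original vertices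
together with, for each edge of `G` (recorded as the ordered pair `(u, v)` with
`u < v` and `G.Adj u v`), the `2x` internal path vertices. -/
abbrev SubVert {V : Type} [LinearOrder V] (G : SimpleGraph V) (x : ℕ) : Type :=
  V ⊕ {p : V × V × Fin (2 * x) // p.1 < p.2.1 ∧ G.Adj p.1 p.2.1}

/-- The `(2x+1)`-subdivision `G^x` of `G`: each edge `{u, v}` of `G` is replaced by the
path `(u, w_{e,1}, …, w_{e,2x}, v)` of length `2x+1` through `2x` new internal vertices
(in particular `G^0 = G`). -/
def Subdiv {V : Type} [LinearOrder V] (G : SimpleGraph V) (x : ℕ) :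
    SimpleGraph (SubVert G x) where
  Adj a b :=
    match a, b with
    | Sum.inl u, Sum.inl v => x = 0 ∧ G.Adj u v
    | Sum.inl a, Sum.inr p =>
        (a = p.1.1 ∧ (p.1.2.2 : ℕ) = 0) ∨ (a = p.1.2.1 ∧ (p.1.2.2 : ℕ) = 2 * x - 1)
    | Sum.inr p, Sum.inl a =>
        (a = p.1.1 ∧ (p.1.2.2 : ℕ) = 0) ∨ (a = p.1.2.1 ∧ (p.1.2.2 : ℕ) = 2 * x - 1)
    | Sum.inr p, Sum.inr q =>
        p.1.1 = q.1.1 ∧ p.1.2.1 = q.1.2.1 ∧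
          ((p.1.2.2 : ℕ) + 1 = (q.1.2.2 : ℕ) ∨ (q.1.2.2 : ℕ) + 1 = (p.1.2.2 : ℕ))
  symm := by
    constructor
    rintro (u | p) (v | q) h
    · exact ⟨h.1, h.2.symm⟩
    · exact h
    · exact h
    · exact ⟨h.1.symm, h.2.1.symm, h.2.2.symm⟩
  loopless := by
    constructor
    rintro (u | p) h
    · exact G.loopless.irrefl u h.2
    · obtain ⟨-, -, h | h⟩ := h <;> omega

/-- The number of edges of `G` with exactly one endpoint in `S`, counted as the number of
ordered adjacent pairs `(u, v)` with `u ∈ S` and `v ∉ S`. -/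
noncomputable def cutCard {V : Type} [Fintype V] (G : SimpleGraph V) (S : Finset V) : ℕ :=
  (Finset.univ.filter fun p : V × V => G.Adj p.1 p.2 ∧ p.1 ∈ S ∧ p.2 ∉ S).card

open Finset

lemma even_card_filter_range_ne_succ_iff (f : ℕ → Bool) (n : ℕ) :
    Even #{i ∈ range n | f i ≠ f (i + 1)} ↔ f 0 = f n := by
  induction n with
  | zero => simp
  | succ n ih =>
    rw [range_add_one, filter_insert]
    split_ifs with h
    · rw [card_insert_of_notMem (by simp), Nat.even_add_one, ih]
      revert h; cases f 0 <;> cases f n <;> cases f (n + 1) <;> simp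
    · rw [ih, not_not.1 h]

lemma card_filter_range_ne_succ_le (f : ℕ → Bool) (k : ℕ) :
    #{i ∈ range (2 * k + 1) | f i ≠ f (i + 1)} ≤
      2 * k + if f 0 = f (2 * k + 1) then 0 else 1 := by
  have hle := (card_filter_le (range (2 * k + 1)) fun i => f i ≠ f (i + 1)).trans_eq
    (card_range _)
  split_ifs with h
  · have heven := (even_card_filter_range_ne_succ_iff f _).2 h
    have hodd : #{i ∈ range (2 * k + 1) | f i ≠ f (i + 1)} ≠ 2 * k + 1 := by
      rintro hcard
      exact Nat.not_even_two_mul_add_one k (hcard ▸ heven)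
    omega
  · exact hle

variable {V : Type} [LinearOrder V]

abbrev SimpleGraph.SortedEdge (G : SimpleGraph V) : Type :=
  {p : V × V // p.1 < p.2 ∧ G.Adj p.1 p.2}

namespace SimpleGraph

variable (G : SimpleGraph V)

lemma card_sortedEdge_le [Finite V] : Nat.card G.SortedEdge ≤ Nat.card G.edgeSet :=
  Nat.card_le_card_of_injective (fun e => ⟨s(e.1.1, e.1.2), e.2.2⟩) fun e f hef => by
    rcases Sym2.eq_iff.1 (congrArg Subtype.val hef) with ⟨h1, h2⟩ | ⟨h1, h2⟩
    · exact Subtype.ext (Prod.ext h1 h2)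
    · exact absurd (h1 ▸ h2 ▸ e.2.1) (lt_asymm f.2.1)

lemma card_filter_sortedEdge_le_cutCard [Fintype V] (S : Finset V) :
    #{e : G.SortedEdge | ¬(e.1.1 ∈ S ↔ e.1.2 ∈ S)} ≤ cutCard G S := by
  refine card_le_card_of_injOn (fun e => if e.1.1 ∈ S then e.1 else e.1.swap) ?_ ?_
  · intro e he
    simp only [coe_filter, mem_univ, true_and, Set.mem_ofPred_eq] at he ⊢
    split_ifs with h
    · exact ⟨e.2.2, h, by tauto⟩
    · exact ⟨e.2.2.symm, by tauto, h⟩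
  · intro e he f hf hef
    simp only [coe_filter, mem_univ, true_and, Set.mem_ofPred_eq] at he hf
    apply Subtype.ext
    have hlt := e.2.1
    have hlt' := f.2.1
    simp only at hef
    split_ifs at hef
    · exact hef
    · rw [hef] at hlt; exact absurd hlt' (lt_asymm hlt)
    · rw [← hef] at hlt'; exact absurd hlt' (lt_asymm hlt)
    · exact Prod.swap_injective hef

end SimpleGraph

namespace Subdiv

variable {G : SimpleGraph V} {x : ℕ}

/-- The vertices `u = pathVert x e 0, …, pathVert x e (2 * x + 1) = v` of the path replacing
the edge `e = (u, v)`. -/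
def pathVert (x : ℕ) (e : G.SortedEdge) (i : ℕ) : SubVert G x :=
  if h : 1 ≤ i ∧ i ≤ 2 * x then Sum.inr ⟨(e.1.1, e.1.2, ⟨i - 1, by omega⟩), e.2⟩
  else if i = 0 then Sum.inl e.1.1 else Sum.inl e.1.2

@[simp]
lemma pathVert_zero (e : G.SortedEdge) : pathVert x e 0 = Sum.inl e.1.1 := by
  simp [pathVert]

@[simp]
lemma pathVert_two_mul_add_one (e : G.SortedEdge) :
    pathVert x e (2 * x + 1) = Sum.inl e.1.2 := by
  simp [pathVert]

def baseEdge (q : {p : V × V × Fin (2 * x) // p.1 < p.2.1 ∧ G.Adj p.1 p.2.1}) :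
    G.SortedEdge :=
  ⟨(q.1.1, q.1.2.1), q.2⟩

lemma pathVert_baseEdge (q : {p : V × V × Fin (2 * x) // p.1 < p.2.1 ∧ G.Adj p.1 p.2.1})
    {i : ℕ} (hi : i = q.1.2.2 + 1) : pathVert x (baseEdge q) i = Sum.inr q := by
  have := q.1.2.2.2
  rw [pathVert, dif_pos (by omega)]
  congr 1
  exact Subtype.ext (Prod.ext rfl (Prod.ext rfl (Fin.ext (by simp [hi]))))

lemma exists_pathVert_of_adj_inl_inr {a : V}
    {q : {p : V × V × Fin (2 * x) // p.1 < p.2.1 ∧ G.Adj p.1 p.2.1}}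
    (h : (Subdiv G x).Adj (Sum.inl a) (Sum.inr q)) :
    ∃ e : G.SortedEdge, ∃ i < 2 * x + 1,
      s(Sum.inl a, Sum.inr q) = s(pathVert x e i, pathVert x e (i + 1)) := by
  have := q.1.2.2.2
  rcases h with ⟨rfl, hq⟩ | ⟨rfl, hq⟩
  · refine ⟨baseEdge q, 0, by omega, ?_⟩
    rw [pathVert_baseEdge q (i := 0 + 1) (by omega), pathVert_zero]
    rfl
  · refine ⟨baseEdge q, 2 * x, by omega, ?_⟩
    rw [pathVert_baseEdge q (i := 2 * x) (by omega), pathVert_two_mul_add_one, Sym2.eq_swap]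
    rfl

lemma exists_pathVert_of_adj_inr_inr
    {q r : {p : V × V × Fin (2 * x) // p.1 < p.2.1 ∧ G.Adj p.1 p.2.1}}
    (h : (Subdiv G x).Adj (Sum.inr q) (Sum.inr r)) (hqr : (q.1.2.2 : ℕ) + 1 = r.1.2.2) :
    ∃ e : G.SortedEdge, ∃ i < 2 * x + 1,
      s(Sum.inr q, Sum.inr r) = s(pathVert x e i, pathVert x e (i + 1)) := by
  have := r.1.2.2.2
  have hbase : baseEdge q = baseEdge r := Subtype.ext (Prod.ext h.1 h.2.1)
  refine ⟨baseEdge q, q.1.2.2 + 1, by omega, ?_⟩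
  rw [pathVert_baseEdge q rfl, hbase, pathVert_baseEdge r (by omega)]

lemma exists_pathVert_of_adj {a b : SubVert G x} (h : (Subdiv G x).Adj a b) :
    ∃ e : G.SortedEdge, ∃ i < 2 * x + 1,
      s(a, b) = s(pathVert x e i, pathVert x e (i + 1)) := by
  rcases a with u | q <;> rcases b with v | r
  · obtain ⟨rfl, huv⟩ := h
    rcases lt_or_gt_of_ne (G.ne_of_adj huv) with hlt | hgt
    · refine ⟨⟨(u, v), hlt, huv⟩, 0, by omega, ?_⟩
      rw [pathVert_zero, pathVert_two_mul_add_one]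
    · refine ⟨⟨(v, u), hgt, huv.symm⟩, 0, by omega, ?_⟩
      rw [pathVert_zero, pathVert_two_mul_add_one, Sym2.eq_swap]
  · exact exists_pathVert_of_adj_inl_inr h
  · rw [Sym2.eq_swap]
    exact exists_pathVert_of_adj_inl_inr h.symm
  · rcases h.2.2 with hqr | hrq
    · exact exists_pathVert_of_adj_inr_inr h hqr
    · rw [Sym2.eq_swap]
      exact exists_pathVert_of_adj_inr_inr h.symm hrq

def cutPositions (S : Finset (SubVert G x)) (e : G.SortedEdge) : Finset ℕ :=
  {i ∈ range (2 * x + 1) | decide (pathVert x e i ∈ S) ≠ decide (pathVert x e (i + 1) ∈ S)}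

lemma card_cutPositions_le (S : Finset (SubVert G x)) (e : G.SortedEdge) :
    #(cutPositions S e) ≤
      2 * x + if ¬(Sum.inl e.1.1 ∈ S ↔ Sum.inl e.1.2 ∈ S) then 1 else 0 := by
  have h := card_filter_range_ne_succ_le (fun i => decide (pathVert x e i ∈ S)) x
  simp only [pathVert_zero, pathVert_two_mul_add_one, decide_eq_decide] at h
  by_cases hends : Sum.inl e.1.1 ∈ S ↔ Sum.inl e.1.2 ∈ S <;>
    simp only [hends] at h ⊢ <;> simpa [cutPositions] using h

variable [Fintype V]

lemma cutCard_le_sum_card_cutPositions (S : Finset (SubVert G x)) :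
    cutCard (Subdiv G x) S ≤ ∑ e : G.SortedEdge, #(cutPositions S e) := by
  rw [← card_sigma]
  refine card_le_card_of_surjOn (fun ei => if pathVert x ei.1 ei.2 ∈ S
    then (pathVert x ei.1 ei.2, pathVert x ei.1 (ei.2 + 1))
    else (pathVert x ei.1 (ei.2 + 1), pathVert x ei.1 ei.2)) ?_
  rintro ⟨a, b⟩ hab
  simp only [coe_filter, mem_univ, true_and, Set.mem_ofPred_eq] at hab
  obtain ⟨hadj, ha, hb⟩ := hab
  obtain ⟨e, i, hi, he⟩ := exists_pathVert_of_adj hadj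
  rcases Sym2.eq_iff.1 he with ⟨rfl, rfl⟩ | ⟨rfl, rfl⟩
  · exact ⟨⟨e, i⟩, by simp [cutPositions, ha, hb]; omega, by simp [ha]⟩
  · exact ⟨⟨e, i⟩, by simp [cutPositions, ha, hb]; omega, by simp [hb]⟩

lemma cutCard_le (S : Finset (SubVert G x)) :
    cutCard (Subdiv G x) S ≤
      2 * x * Nat.card G.SortedEdge + cutCard G {v | Sum.inl v ∈ S} := by
  calc cutCard (Subdiv G x) S
      ≤ ∑ e : G.SortedEdge,
          (2 * x + if ¬(Sum.inl e.1.1 ∈ S ↔ Sum.inl e.1.2 ∈ S) then 1 else 0) :=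
        (cutCard_le_sum_card_cutPositions S).trans
          (sum_le_sum fun e _ => card_cutPositions_le S e)
    _ = 2 * x * Nat.card G.SortedEdge +
          #{e : G.SortedEdge | ¬(Sum.inl e.1.1 ∈ S ↔ Sum.inl e.1.2 ∈ S)} := by
        rw [sum_add_distrib, sum_const, card_filter, card_univ, Nat.card_eq_fintype_card,
          smul_eq_mul, mul_comm]
        congr!
    _ ≤ 2 * x * Nat.card G.SortedEdge + cutCard G {v | Sum.inl v ∈ S} := by
        gcongr
        simpa using G.card_filter_sortedEdge_le_cutCard {v | Sum.inl v ∈ S}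

end Subdiv

/-- For every vertex subset `S` of the subdivided graph `G^x`, if `c` is
the number of edges of `G^x` with exactly one endpoint in `S`, then there is a subset
`S' ⊆ V` such that the number of edges of `G` with exactly one endpoint in `S'` is at
least `c - 2x·|E|`. -/
theorem stmt_8 {V : Type} [Fintype V] [LinearOrder V] (G : SimpleGraph V) (x : ℕ)
    (S : Finset (SubVert G x)) :
    ∃ S' : Finset V,
      (cutCard (Subdiv G x) S : ℤ) - 2 * x * Nat.card G.edgeSet ≤ cutCard G S' := by
  refine ⟨({v | Sum.inl v ∈ S} : Finset V), ?_⟩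
  have hcut := Subdiv.cutCard_le S
  have hedges := Nat.mul_le_mul_left (2 * x) G.card_sortedEdge_le
  zify at hcut hedges
  linarith
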